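/- arXiv:1202.0766 — 4 statements merged into one kernel-verified Lean document; each statement's English description precedes it below -/
import Mathlib

section
/- For every positive integer i and every real number t ≠ 0, the i-th derivative of the function h(t) = e^{1/t} is given by h^{(i)}(t) = (-1)^i e^{1/t} t^{-2i} Σ_{k=0}^{i-1} a_{i,k} t^k, where a_{i,k} = C(i,k) · C(i-1,k) · k! and C(n,m) denotes the binomial coefficient. -/
/-!
Write `h⁽ⁱ⁾(t) = (-1)^i e^{1/t} t^{-2i} P_i(t)`. Differentiating once more gives
`P_{i+1}(t) = (1 + 2 i t) P_i(t) - t² P_i'(t)`, so on coefficients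
`a_{i+1,k+1} = a_{i,k+1} + (2i - k) a_{i,k}`, and this recurrence is a consequence of
Pascal's rule and `(k + 1) C(n, k + 1) = (n - k) C(n, k)`. Induct on `i`, starting from
`h'(t) = -e^{1/t} / t²`.
-/

open Real Finset Nat

/-- The Lah number `L(i, i - k)`. -/
noncomputable def expOneDivCoeff (i k : ℕ) : ℝ := i.choose k * (i - 1).choose k * k !

theorem expOneDivCoeff_zero_right (i : ℕ) : expOneDivCoeff i 0 = 1 := by
  simp [expOneDivCoeff]

theorem expOneDivCoeff_self {i : ℕ} (hi : 1 ≤ i) : expOneDivCoeff i i = 0 := by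
  simp [expOneDivCoeff, choose_eq_zero_of_lt (show i - 1 < i by omega)]

theorem expOneDivCoeff_succ_succ {i l : ℕ} (h : l < i) :
    expOneDivCoeff (i + 1) (l + 1) =
      expOneDivCoeff i (l + 1) + (2 * i - l) * expOneDivCoeff i l := by
  obtain ⟨n, rfl⟩ : ∃ n, i = n + 1 := ⟨i - 1, by omega⟩
  have hl : l ≤ n := by omega
  have e1 : ((n + 1).choose (l + 1) : ℝ) * (l + 1) = (n + 1).choose l * (n + 1 - l) := by
    rw [show (n : ℝ) + 1 - l = ((n + 1 - l : ℕ) : ℝ) by push_cast [Nat.cast_sub h.le]; ring]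
    exact_mod_cast choose_succ_right_eq (n + 1) l
  have e2 : (n.choose (l + 1) : ℝ) * (l + 1) = n.choose l * (n - l) := by
    rw [← Nat.cast_sub hl]
    exact_mod_cast choose_succ_right_eq n l
  have e3 : ((n : ℝ) + 1) * n.choose l = (n + 1).choose (l + 1) * (l + 1) := by
    exact_mod_cast add_one_mul_choose_eq n l
  simp only [expOneDivCoeff, Nat.add_sub_cancel, choose_succ_succ' (n + 1) l, factorial_succ]
  push_cast
  linear_combination (n.choose l * l ! : ℝ) * e1 - ((n + 1).choose (l + 1) * l ! : ℝ) * e2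
    - (((n + 1).choose l + (n + 1).choose (l + 1)) * l ! : ℝ) * e3

theorem sum_expOneDivCoeff_succ {i : ℕ} (hi : 1 ≤ i) (t : ℝ) :
    ∑ k ∈ range (i + 1), expOneDivCoeff (i + 1) k * t ^ k =
      (1 + 2 * i * t) * ∑ k ∈ range i, expOneDivCoeff i k * t ^ k
        - t ^ 2 * ∑ k ∈ range i, expOneDivCoeff i k * (k * t ^ (k - 1)) := by
  calc ∑ k ∈ range (i + 1), expOneDivCoeff (i + 1) k * t ^ k
      = ∑ k ∈ range i, (expOneDivCoeff i (k + 1) * t ^ (k + 1)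
          + (2 * i - k) * expOneDivCoeff i k * t ^ (k + 1)) + expOneDivCoeff i 0 * t ^ 0 := by
        rw [sum_range_succ', expOneDivCoeff_zero_right, expOneDivCoeff_zero_right]
        refine congrArg (· + _) (sum_congr rfl fun k hk => ?_)
        rw [expOneDivCoeff_succ_succ (mem_range.mp hk)]
        ring
    _ = ∑ k ∈ range (i + 1), expOneDivCoeff i k * t ^ k
          + ∑ k ∈ range i, (2 * i - k) * expOneDivCoeff i k * t ^ (k + 1) := by
        rw [sum_add_distrib, sum_range_succ' (fun k => expOneDivCoeff i k * t ^ k)]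
        ring
    _ = _ := by
        rw [sum_range_succ, expOneDivCoeff_self hi, zero_mul, add_zero, mul_sum, mul_sum,
          ← sum_sub_distrib, ← sum_add_distrib]
        refine sum_congr rfl fun k _ => ?_
        rcases k with _ | k
        · simp only [CharP.cast_eq_zero, pow_zero, zero_add, pow_one, zero_mul, mul_zero, sub_zero]
          ring
        · simp only [cast_add, cast_one, add_tsub_cancel_right]
          ring

theorem hasDerivAt_exp_one_div {t : ℝ} (ht : t ≠ 0) :
    HasDerivAt (fun x => exp (1 / x)) (-(exp (1 / t) / t ^ 2)) t := by
  have := (hasDerivAt_inv ht).exp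
  simp only [one_div] at this ⊢
  convert this using 1
  ring

theorem hasDerivAt_exp_one_div_div_pow_mul {p : ℝ → ℝ} {p' t : ℝ} (hp : HasDerivAt p p' t)
    (ht : t ≠ 0) (n : ℕ) :
    HasDerivAt (fun x => exp (1 / x) / x ^ n * p x)
      (-(exp (1 / t) / t ^ (n + 2)) * ((1 + (n : ℝ) * t) * p t - t ^ 2 * p')) t := by
  refine (((hasDerivAt_exp_one_div ht).fun_div (hasDerivAt_pow n t) (pow_ne_zero n ht)).fun_mul
    hp).congr_deriv ?_
  rcases n with _ | n
  · field_simp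
    ring
  · rw [add_tsub_cancel_right]
    field_simp
    ring

/-- For every positive integer `i` and every real `t ≠ 0`, the
`i`-th derivative of `h(t) = exp (1/t)` equals
`(-1)^i * exp (1/t) / t^(2i) * ∑_{k=0}^{i-1} a_{i,k} t^k`,
where `a_{i,k} = C(i,k) * C(i-1,k) * k!`. -/
theorem iteratedDeriv_exp_one_div (i : ℕ) (hi : 1 ≤ i) (t : ℝ) (ht : t ≠ 0) :
    iteratedDeriv i (fun x : ℝ => Real.exp (1 / x)) t =
      (-1 : ℝ) ^ i * Real.exp (1 / t) / t ^ (2 * i) *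
        ∑ k ∈ Finset.range i,
          ((Nat.choose i k : ℝ) * (Nat.choose (i - 1) k : ℝ) * (Nat.factorial k : ℝ)) * t ^ k := by
  change _ = _ * ∑ k ∈ range i, expOneDivCoeff i k * t ^ k
  induction i, hi using Nat.le_induction generalizing t with
  | base =>
    rw [iteratedDeriv_one, (hasDerivAt_exp_one_div ht).deriv, sum_range_one,
      expOneDivCoeff_zero_right]
    ring
  | succ i hi ih =>
    have hsum : HasDerivAt (fun x => ∑ k ∈ range i, expOneDivCoeff i k * x ^ k)
        (∑ k ∈ range i, expOneDivCoeff i k * (k * t ^ (k - 1))) t :=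
      HasDerivAt.fun_sum fun k _ => (hasDerivAt_pow k t).const_mul _
    have hih : iteratedDeriv i (fun x => exp (1 / x)) =ᶠ[nhds t] fun x =>
        (-1) ^ i * (exp (1 / x) / x ^ (2 * i) * ∑ k ∈ range i, expOneDivCoeff i k * x ^ k) := by
      filter_upwards [isOpen_compl_singleton.mem_nhds ht] with x hx
      rw [ih x hx]
      ring
    rw [iteratedDeriv_succ, hih.deriv_eq,
      ((hasDerivAt_exp_one_div_div_pow_mul hsum ht _).const_mul _).deriv, sum_expOneDivCoeff_succ hi]
    push_cast
    ring
end

section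
/- For every positive integer i and every real number t ≠ 0, the i-th derivative of the function g(t) = e^{-1/t} is given by g^{(i)}(t) = e^{-1/t} t^{-2i} Σ_{k=0}^{i-1} (-1)^k a_{i,k} t^k, where a_{i,k} = C(i,k) · C(i-1,k) · k!. -/
/-! Writing `g⁽ⁱ⁾(t) = e^{-1/t} t^{-2i} Pᵢ(t)` with `Pᵢ = expNegInvPoly i`, the product rule
gives `Pᵢ₊₁ = (1 - 2it) Pᵢ + t² Pᵢ'`. On coefficients this is the recurrence
`a_{i+1,k+1} = a_{i,k+1} + (2i - k) a_{i,k}`, which follows from Pascal's rule together with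
`(k + 1) C(i, k + 1) = (i - k) C(i, k)` and `i C(i - 1, k) = (i - k) C(i, k)`; the top coefficient
`a_{i,i}` vanishes because `C(i - 1, i) = 0`. -/

open Finset Real Nat Topology Filter

noncomputable def expNegInvCoeff (i k : ℕ) : ℝ :=
  (i.choose k : ℝ) * ((i - 1).choose k : ℝ) * (k ! : ℝ)

theorem expNegInvCoeff_succ_succ (i k : ℕ) :
    expNegInvCoeff (i + 1) (k + 1) =
      expNegInvCoeff i (k + 1) + (2 * i - k) * expNegInvCoeff i k := by
  unfold expNegInvCoeff
  rcases i with _ | j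
  · cases k <;> simp
  rcases lt_or_ge k (j + 1) with hk | hk
  · have e1 := congrArg (Nat.cast (R := ℝ)) (choose_succ_right_eq (j + 1) k)
    have e2 := congrArg (Nat.cast (R := ℝ)) (choose_mul_succ_eq j k)
    have p1 := congrArg (Nat.cast (R := ℝ)) (choose_succ_succ' (j + 1) k)
    have p2 := congrArg (Nat.cast (R := ℝ)) (choose_succ_succ' j k)
    push_cast [Nat.cast_sub hk.le, factorial_succ] at e1 e2 p1 p2 ⊢
    rw [p1]
    linear_combination ((j + 1).choose (k + 1) * (k + 1) * k ! : ℝ) * p2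
      + (k ! * ((j + 1).choose k + j.choose k) : ℝ) * e1 - ((j + 1).choose k * k ! : ℝ) * e2
  · simp [choose_eq_zero_of_lt (Nat.lt_succ_of_le hk),
      choose_eq_zero_of_lt (Nat.lt_of_lt_of_le j.lt_succ_self hk)]

theorem expNegInvCoeff_zero_right (i : ℕ) : expNegInvCoeff i 0 = 1 := by
  simp [expNegInvCoeff]

theorem expNegInvCoeff_self {i : ℕ} (hi : 1 ≤ i) : expNegInvCoeff i i = 0 := by
  simp [expNegInvCoeff, choose_eq_zero_of_lt (Nat.sub_lt hi one_pos)]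

noncomputable def expNegInvPoly (i : ℕ) (t : ℝ) : ℝ :=
  ∑ k ∈ range i, (-1) ^ k * expNegInvCoeff i k * t ^ k

theorem hasDerivAt_expNegInvPoly (i : ℕ) (t : ℝ) :
    HasDerivAt (expNegInvPoly i)
      (∑ k ∈ range i, (-1) ^ k * expNegInvCoeff i k * (k * t ^ (k - 1))) t :=
  HasDerivAt.fun_sum fun k _ => (hasDerivAt_pow k t).const_mul _

theorem expNegInvPoly_succ {i : ℕ} (hi : 1 ≤ i) (t : ℝ) :
    expNegInvPoly (i + 1) t =
      (1 - 2 * i * t) * expNegInvPoly i t + t ^ 2 * deriv (expNegInvPoly i) t := by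
  have shifted : ∑ k ∈ range i, (-1) ^ (k + 1) * expNegInvCoeff i (k + 1) * t ^ (k + 1) + 1 =
      expNegInvPoly i t := by
    have := sum_range_succ' (fun k => (-1) ^ k * expNegInvCoeff i k * t ^ k) i
    rw [sum_range_succ, expNegInvCoeff_self hi, expNegInvCoeff_zero_right] at this
    simpa [expNegInvPoly] using this.symm
  have shifted_deriv : t ^ 2 * deriv (expNegInvPoly i) t =
      ∑ k ∈ range i, (-1) ^ k * expNegInvCoeff i k * k * t ^ (k + 1) := by
    rw [(hasDerivAt_expNegInvPoly i t).deriv, mul_sum]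
    refine sum_congr rfl fun k _ => ?_
    rcases k with _ | k
    · simp
    · rw [Nat.add_sub_cancel]; ring
  have weighted : ∑ k ∈ range i, (-1) ^ k * expNegInvCoeff i k * (k - 2 * i) * t ^ (k + 1) =
      t ^ 2 * deriv (expNegInvPoly i) t - 2 * i * t * expNegInvPoly i t := by
    rw [shifted_deriv, expNegInvPoly, mul_sum, ← sum_sub_distrib]
    exact sum_congr rfl fun k _ => by ring
  calc expNegInvPoly (i + 1) t
      = ∑ k ∈ range i, (-1) ^ (k + 1) * expNegInvCoeff (i + 1) (k + 1) * t ^ (k + 1) + 1 := by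
        simp [expNegInvPoly, sum_range_succ', expNegInvCoeff_zero_right]
    _ = (∑ k ∈ range i, (-1) ^ (k + 1) * expNegInvCoeff i (k + 1) * t ^ (k + 1) + 1) +
          ∑ k ∈ range i, (-1) ^ k * expNegInvCoeff i k * (k - 2 * i) * t ^ (k + 1) := by
        rw [add_right_comm, ← sum_add_distrib]
        congr 1
        exact sum_congr rfl fun k _ => by rw [expNegInvCoeff_succ_succ]; ring
    _ = _ := by rw [shifted, weighted]; ring

theorem hasDerivAt_exp_neg_one_div {t : ℝ} (ht : t ≠ 0) :
    HasDerivAt (fun x => exp (-1 / x)) (exp (-1 / t) / t ^ 2) t := by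
  have := ((hasDerivAt_inv ht).fun_neg).exp
  simp only [neg_neg, ← div_eq_mul_inv] at this
  simpa [neg_div] using this

theorem hasDerivAt_exp_neg_one_div_div_pow_mul {f : ℝ → ℝ} {f' t : ℝ}
    (hf : HasDerivAt f f' t) (ht : t ≠ 0) (n : ℕ) :
    HasDerivAt (fun x => exp (-1 / x) / x ^ n * f x)
      (exp (-1 / t) / t ^ (n + 2) * ((1 - (n : ℝ) * t) * f t + t ^ 2 * f')) t := by
  refine (((hasDerivAt_exp_neg_one_div ht).fun_div (hasDerivAt_pow n t)
    (pow_ne_zero n ht)).fun_mul hf).congr_deriv ?_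
  rcases n with _ | n
  · field_simp; ring
  · rw [Nat.add_sub_cancel]; field_simp; push_cast; ring

/-- For every positive integer `i` and every real `t ≠ 0`, the
`i`-th derivative of `g(t) = exp (-1/t)` equals
`exp (-1/t) / t^(2i) * ∑_{k=0}^{i-1} (-1)^k a_{i,k} t^k`,
where `a_{i,k} = C(i,k) * C(i-1,k) * k!`. -/
theorem iteratedDeriv_exp_neg_one_div (i : ℕ) (hi : 1 ≤ i) (t : ℝ) (ht : t ≠ 0) :
    iteratedDeriv i (fun x : ℝ => Real.exp (-1 / x)) t =
      Real.exp (-1 / t) / t ^ (2 * i) *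
        ∑ k ∈ Finset.range i,
          (-1 : ℝ) ^ k *
            ((Nat.choose i k : ℝ) * (Nat.choose (i - 1) k : ℝ) * (Nat.factorial k : ℝ)) * t ^ k := by
  change _ = exp (-1 / t) / t ^ (2 * i) * expNegInvPoly i t
  induction i, hi using Nat.le_induction generalizing t with
  | base =>
    rw [iteratedDeriv_one, (hasDerivAt_exp_neg_one_div ht).deriv]
    simp [expNegInvPoly, expNegInvCoeff_zero_right]
  | succ i hi ih =>
    have local_eq : iteratedDeriv i (fun x => exp (-1 / x)) =ᶠ[𝓝 t]
        fun x => exp (-1 / x) / x ^ (2 * i) * expNegInvPoly i x :=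
      eventually_ne_nhds ht |>.mono ih
    have hP := (hasDerivAt_expNegInvPoly i t).differentiableAt.hasDerivAt
    rw [iteratedDeriv_succ, local_eq.deriv_eq,
      (hasDerivAt_exp_neg_one_div_div_pow_mul hP ht _).deriv, expNegInvPoly_succ hi]
    push_cast
    ring
end

section
/- The function h(t) = e^{1/t} is completely monotonic on the interval (0,∞); that is, for every integer n ≥ 0 and every t > 0, (-1)^n h^{(n)}(t) ≥ 0. -/
/-!
Each derivative of `exp (1 / t)` has the form `(-1)^n P_n(1/t) exp (1/t)`, where the polynomials
`P_0 = 1`, `P_{n+1} = (P_n + P_n') X²` (chain rule through `s = 1/t`, with `ds/dt = -s²`) have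
nonnegative coefficients. So `(-1)^n h^{(n)}(t) = P_n(1/t) exp (1/t) ≥ 0` for `t > 0`.
-/

open Polynomial Real

namespace Polynomial

variable {R : Type*} [Semiring R] [PartialOrder R]

theorem coeff_mul_X_pow_nonneg {p : R[X]} (hp : ∀ i, 0 ≤ p.coeff i) (k i : ℕ) :
    0 ≤ (p * X ^ k).coeff i := by
  rw [coeff_mul_X_pow']
  split_ifs
  exacts [hp _, le_rfl]

variable [IsOrderedRing R]

theorem eval_nonneg_of_coeff_nonneg {p : R[X]} (hp : ∀ i, 0 ≤ p.coeff i) {x : R} (hx : 0 ≤ x) :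
    0 ≤ p.eval x := by
  rw [eval_eq_sum_range]
  exact Finset.sum_nonneg fun i _ => mul_nonneg (hp i) (pow_nonneg hx i)

theorem coeff_derivative_nonneg {p : R[X]} (hp : ∀ i, 0 ≤ p.coeff i) (i : ℕ) :
    0 ≤ (derivative p).coeff i := by
  rw [coeff_derivative]
  exact mul_nonneg (hp _) (add_nonneg i.cast_nonneg zero_le_one)

end Polynomial

noncomputable def expInvPoly : ℕ → ℝ[X]
  | 0 => 1
  | n + 1 => (expInvPoly n + derivative (expInvPoly n)) * X ^ 2

theorem expInvPoly_coeff_nonneg (n i : ℕ) : 0 ≤ (expInvPoly n).coeff i := by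
  induction n generalizing i with
  | zero => rw [expInvPoly, coeff_one]; split_ifs <;> norm_num
  | succ n ih =>
    refine coeff_mul_X_pow_nonneg (fun j => ?_) 2 i
    rw [coeff_add]
    exact add_nonneg (ih j) (coeff_derivative_nonneg ih j)

theorem hasDerivAt_eval_inv_mul_exp_inv (P : ℝ[X]) {t : ℝ} (ht : t ≠ 0) :
    HasDerivAt (fun s => P.eval s⁻¹ * exp s⁻¹)
      (-(((P + derivative P) * X ^ 2).eval t⁻¹ * exp t⁻¹)) t := by
  have hinv : HasDerivAt (fun s : ℝ => s⁻¹) (-(t ^ 2)⁻¹) t := hasDerivAt_inv ht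
  have hP : HasDerivAt (fun s => P.eval s⁻¹) ((derivative P).eval t⁻¹ * -(t ^ 2)⁻¹) t :=
    (P.hasDerivAt t⁻¹).comp t hinv
  have hexp : HasDerivAt (fun s => exp s⁻¹) (exp t⁻¹ * -(t ^ 2)⁻¹) t :=
    (hasDerivAt_exp t⁻¹).comp t hinv
  refine (hP.fun_mul hexp).congr_deriv ?_
  simp only [eval_mul, eval_add, eval_pow, eval_X, inv_pow]
  ring

theorem iteratedDeriv_exp_one_div_s8 (n : ℕ) {t : ℝ} (ht : t ≠ 0) :
    iteratedDeriv n (fun x => exp (1 / x)) t = (-1) ^ n * ((expInvPoly n).eval t⁻¹ * exp t⁻¹) := by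
  induction n generalizing t with
  | zero => simp [expInvPoly]
  | succ n ih =>
    have hlocal : iteratedDeriv n (fun x => exp (1 / x)) =ᶠ[nhds t]
        fun s => (-1) ^ n * ((expInvPoly n).eval s⁻¹ * exp s⁻¹) := by
      filter_upwards [eventually_ne_nhds ht] with s hs using ih hs
    rw [iteratedDeriv_succ, hlocal.deriv_eq,
      ((hasDerivAt_eval_inv_mul_exp_inv (expInvPoly n) ht).const_mul _).deriv, expInvPoly]
    ring

/-- `h(t) = exp (1/t)` is completely monotonic on `(0, ∞)`:
for every `n ≥ 0` and `t > 0`, `(-1)^n h^(n)(t) ≥ 0`. -/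
theorem exp_one_div_completely_monotonic (n : ℕ) (t : ℝ) (ht : 0 < t) :
    0 ≤ (-1 : ℝ) ^ n * iteratedDeriv n (fun x : ℝ => Real.exp (1 / x)) t := by
  rw [iteratedDeriv_exp_one_div_s8 n ht.ne', ← mul_assoc, ← mul_pow, neg_one_mul, neg_neg, one_pow,
    one_mul]
  have hP := eval_nonneg_of_coeff_nonneg (expInvPoly_coeff_nonneg n) (inv_nonneg.2 ht.le)
  positivity
end

section
/- For integers i ≥ 1 and 1 ≤ k ≤ i-1, the coefficients a_{i,k} = C(i,k) · C(i-1,k) · k! satisfy the recurrence a_{i+1,k} = a_{i,k} + (2i - k + 1) · a_{i,k-1}, where C(n,m) denotes the binomial coefficient. -/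
/-!
Expanding `C(i+1,k)` and `C(i,k)` by Pascal's rule, the difference `a_{i+1,k} - a_{i,k}` is
`C(i,k) k! (C(i,k-1) + C(i-1,k-1))`. Absorbing one factor `k` gives
`C(i,k) k! = (i-k+1) C(i,k-1) (k-1)!`, and `(i-k+1) C(i,k-1) = i C(i-1,k-1)`, so the difference
is `(i + (i-k+1)) a_{i,k-1}`.
-/

open Nat

theorem choose_mul_choose_mul_factorial_succ_succ (n m : ℕ) :
    (n + 2).choose (m + 1) * (n + 1).choose (m + 1) * (m + 1)! =
      (n + 1).choose (m + 1) * n.choose (m + 1) * (m + 1)! +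
        (n + 1 + (n + 1 - m)) * ((n + 1).choose m * n.choose m * m !) := by
  have pascal_succ := choose_succ_succ' (n + 1) m
  have pascal := choose_succ_succ' n m
  have absorb := choose_succ_right_eq (n + 1) m
  have absorb_top := choose_mul_succ_eq n m
  rw [factorial_succ]
  linear_combination (n + 1).choose (m + 1) * (m + 1) * m ! * (pascal_succ + pascal) +
    ((n + 1).choose m + n.choose m) * m ! * absorb - (n + 1).choose m * m ! * absorb_top

/-- For integers `i ≥ 1` and `1 ≤ k ≤ i - 1`, the coefficients
`a_{i,k} = C(i,k) * C(i-1,k) * k!` satisfy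
`a_{i+1,k} = a_{i,k} + (2i - k + 1) * a_{i,k-1}`. -/
theorem coefficient_recurrence (i k : ℕ) (hi : 1 ≤ i) (hk : 1 ≤ k) (hki : k ≤ i - 1) :
    Nat.choose (i + 1) k * Nat.choose i k * Nat.factorial k =
      Nat.choose i k * Nat.choose (i - 1) k * Nat.factorial k +
        (2 * i - k + 1) *
          (Nat.choose i (k - 1) * Nat.choose (i - 1) (k - 1) * Nat.factorial (k - 1)) := by
  obtain ⟨n, rfl⟩ : ∃ n, i = n + 1 := ⟨i - 1, by omega⟩
  obtain ⟨m, rfl⟩ : ∃ m, k = m + 1 := ⟨k - 1, by omega⟩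
  have hcoeff : 2 * (n + 1) - (m + 1) + 1 = n + 1 + (n + 1 - m) := by omega
  simpa only [add_tsub_cancel_right, hcoeff] using choose_mul_choose_mul_factorial_succ_succ n m
end
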